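/- Let 0 < a ≤ 1/2, let θ = (θ_s)_{s∈ℝ} be the flow on L^∞({0,1}^ℕ × [0,1), ν_a × dx) induced by the flow built under the constant ceiling 1 over the dyadic odometer. Then for every f ∈ L^∞, lim_{n→∞} ‖θ_{2^n}(f) − f‖_{L^2(ν_a × dx)} = 0. -/

import Mathlib

open MeasureTheory Filter Topology ENNReal

/-- The dyadic odometer ("addition of `(1,0,0,...)` with carry to the right") on `{0,1}^ℕ`. -/
def odometer (x : ℕ → Bool) : ℕ → Bool :=
  fun n => if ∀ k < n, x k = true then !(x n) else x n

/-- The inverse of the dyadic odometer. -/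
def odometerInv (x : ℕ → Bool) : ℕ → Bool :=
  fun n => if ∀ k < n, x k = false then !(x n) else x n

/-- The `m`-th power (for `m : ℤ`) of the dyadic odometer. -/
def odometerZ (m : ℤ) (x : ℕ → Bool) : ℕ → Bool :=
  if 0 ≤ m then odometer^[m.toNat] x else odometerInv^[(-m).toNat] x

/-- The flow built under the constant ceiling function `1` over the dyadic odometer:
`g̃_s(x, y) = (g^n x, y′)` where `s + y = n + y′`, `n ∈ ℤ`, `0 ≤ y′ < 1`. -/
noncomputable def flowMap (s : ℝ) (z : (ℕ → Bool) × ℝ) : (ℕ → Bool) × ℝ :=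
  (odometerZ ⌊s + z.2⌋ z.1, Int.fract (s + z.2))

/-- `ν` is the Bernoulli product measure `⊗_n (a δ_0 + (1-a) δ_1)` on `{0,1}^ℕ`. -/
def IsBernoulliProd (a : ℝ) (ν : Measure (ℕ → Bool)) : Prop :=
  IsProbabilityMeasure ν ∧
    ∀ (n : ℕ) (s : Fin n → Bool),
      ν {x | ∀ i : Fin n, x i = s i} =
        ∏ i : Fin n, ENNReal.ofReal (if s i then 1 - a else a)

/-- The total variation distance of two measures. -/
noncomputable def tvDist {Ω : Type*} [MeasurableSpace Ω] (μ ν : Measure Ω) : ℝ≥0∞ :=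
  (μ - ν) Set.univ + (ν - μ) Set.univ

/-!
On the strip `y ∈ [0, 1)` the map `g̃_{-2^n}` is `(x, y) ↦ (S_n x, y)` with
`S_n = odometerInv^[2^n]`. The map `S_n` fixes the first `n` coordinates, so `S_n → id`
pointwise, and where the first `1` at or after position `n` sits at `n + j` it flips the
coordinates `n, …, n + j`. That flip has density `(a / (1 - a))^j · (1 - a) / a ≤ (1 - a) / a`
with respect to `ν_a` on its image, so `ν_a ∘ S_n⁻¹ ≤ ((1 - a) / a) ν_a` uniformly in `n`.
Hence the operators `f ↦ f ∘ S_n` are uniformly bounded on `L²`, and convergence, which holds for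
bounded continuous `f` by dominated convergence, extends to all of `L²` by density.
-/

open PiNat
open scoped BoundedContinuousFunction

theorem eLpNorm_comp_le_of_map_le {X Y E : Type*} [MeasurableSpace X] [MeasurableSpace Y]
    [NormedAddCommGroup E] {μ : Measure X} {ν : Measure Y} {T : X → Y} (hT : Measurable T)
    {c : ℝ≥0∞} (hmap : μ.map T ≤ c • ν) {p : ℝ≥0∞} (hp : p ≠ ∞) {f : Y → E}
    (hf : AEStronglyMeasurable f ν) :
    eLpNorm (f ∘ T) p μ ≤ c ^ (1 / p).toReal * eLpNorm f p ν := by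
  rw [← eLpNorm_map_measure (hf.mono_ac (Measure.absolutelyContinuous_of_le_smul hmap))
    hT.aemeasurable]
  exact (eLpNorm_mono_measure f hmap).trans_eq (eLpNorm_smul_measure_of_ne_top hp f c)

theorem tendsto_eLpNorm_comp_sub_of_tendsto {X E : Type*} [TopologicalSpace X]
    [SecondCountableTopology X] [MeasurableSpace X] [OpensMeasurableSpace X]
    [NormedAddCommGroup E] {μ : Measure X} [IsFiniteMeasure μ] {p : ℝ≥0∞} (hp : 1 ≤ p)
    (hp' : p ≠ ∞) {T : ℕ → X → X} (hTm : ∀ n, Measurable (T n))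
    (hT : ∀ x, Tendsto (fun n => T n x) atTop (𝓝 x)) (g : X →ᵇ E) :
    Tendsto (fun n => eLpNorm (fun x => g (T n x) - g x) p μ) atTop (𝓝 0) := by
  have hg : AEStronglyMeasurable g μ := g.continuous.aestronglyMeasurable
  have hui : UnifIntegrable (fun n x => g (T n x)) p μ := by
    intro ε hε
    obtain ⟨δ, hδ, hbound⟩ :=
      unifIntegrable_const (ι := ℕ) hp hp' (memLp_const (μ := μ) (p := p) ‖g‖) hε
    refine ⟨δ, hδ, fun n s hs hμs => (eLpNorm_mono fun x => ?_).trans (hbound n s hs hμs)⟩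
    by_cases hx : x ∈ s <;> simp [hx, g.norm_coe_le_norm]
  exact tendsto_Lp_finite_of_tendsto_ae hp hp'
    (fun n => g.continuous.aestronglyMeasurable.comp_measurable (hTm n))
    (.of_bound hg ‖g‖ (ae_of_all _ g.norm_coe_le_norm)) hui
    (ae_of_all _ fun x => (g.continuous.tendsto x).comp (hT x))

theorem tendsto_eLpNorm_comp_sub_of_map_le {X E : Type*} [TopologicalSpace X] [NormalSpace X]
    [SecondCountableTopology X] [MeasurableSpace X] [BorelSpace X] [NormedAddCommGroup E]
    [NormedSpace ℝ E] {μ : Measure X} [IsFiniteMeasure μ] [μ.WeaklyRegular] {p : ℝ≥0∞}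
    (hp : 1 ≤ p) (hp' : p ≠ ∞) {T : ℕ → X → X} (hTm : ∀ n, Measurable (T n))
    (hT : ∀ x, Tendsto (fun n => T n x) atTop (𝓝 x)) {c : ℝ≥0∞} (hc : c ≠ ∞)
    (hmap : ∀ n, μ.map (T n) ≤ c • μ) {f : X → E} (hf : MemLp f p μ) :
    Tendsto (fun n => eLpNorm (fun x => f (T n x) - f x) p μ) atTop (𝓝 0) := by
  rw [ENNReal.tendsto_atTop_zero]
  intro ε hε
  set K := c ^ (1 / p).toReal + 1
  have hK0 : K ≠ 0 := by simp [K]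
  have hKtop : K ≠ ∞ := by simp [K, ENNReal.rpow_eq_top_iff, hc]
  have hε2 : ε / 2 ≠ 0 := by simpa using hε.ne'
  obtain ⟨g, hfg, -⟩ := hf.exists_boundedContinuous_eLpNorm_sub_le hp'
    (ENNReal.div_pos hε2 hKtop).ne'
  obtain ⟨N, hN⟩ := ENNReal.tendsto_atTop_zero.1
    (tendsto_eLpNorm_comp_sub_of_tendsto (μ := μ) hp hp' hTm hT g) (ε / 2)
    (pos_iff_ne_zero.2 hε2)
  refine ⟨N, fun n hn => ?_⟩
  have hfg_meas : AEStronglyMeasurable (f - ⇑g) μ := hf.1.sub g.continuous.aestronglyMeasurable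
  have hgT_meas : AEStronglyMeasurable (fun x => g (T n x) - g x) μ :=
    (g.continuous.aestronglyMeasurable.comp_measurable (hTm n)).sub
      g.continuous.aestronglyMeasurable
  have hgf_meas : AEStronglyMeasurable (⇑g - f) μ := g.continuous.aestronglyMeasurable.sub hf.1
  have hsplit : (fun x => f (T n x) - f x) =
      (f - ⇑g) ∘ T n + ((fun x => g (T n x) - g x) + (⇑g - f)) := by
    funext x
    simp only [Pi.add_apply, Pi.sub_apply, Function.comp_apply]
    abel
  have hcomp : eLpNorm ((f - ⇑g) ∘ T n) p μ ≤ c ^ (1 / p).toReal * (ε / 2 / K) :=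
    (eLpNorm_comp_le_of_map_le (hTm n) (hmap n) hp' hfg_meas).trans (by gcongr)
  have hgf : eLpNorm (⇑g - f) p μ ≤ ε / 2 / K := by rwa [eLpNorm_sub_comm]
  rw [hsplit]
  calc eLpNorm ((f - ⇑g) ∘ T n + ((fun x => g (T n x) - g x) + (⇑g - f))) p μ
      ≤ eLpNorm ((f - ⇑g) ∘ T n) p μ +
          (eLpNorm (fun x => g (T n x) - g x) p μ + eLpNorm (⇑g - f) p μ) :=
        (eLpNorm_add_le (hfg_meas.comp_quasiMeasurePreserving
          ⟨hTm n, Measure.absolutelyContinuous_of_le_smul (hmap n)⟩)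
          (hgT_meas.add hgf_meas) hp).trans
          (add_le_add_right (eLpNorm_add_le hgT_meas hgf_meas hp) _)
    _ ≤ c ^ (1 / p).toReal * (ε / 2 / K) + (ε / 2 + ε / 2 / K) :=
        add_le_add hcomp (add_le_add (hN n hn) hgf)
    _ = K * (ε / 2 / K) + ε / 2 := by ring
    _ = ε := by rw [ENNReal.mul_div_cancel hK0 hKtop, ENNReal.add_halves]

lemma MeasureTheory.Measure.map_prodMap_id_le {X Y : Type*} [MeasurableSpace X]
    [MeasurableSpace Y] {μ : Measure X} {ν : Measure Y} [SFinite μ] [SFinite ν] {T : X → X}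
    (hT : Measurable T)
    {c : ℝ≥0∞} (h : μ.map T ≤ c • μ) : (μ.prod ν).map (Prod.map T id) ≤ c • μ.prod ν := by
  rw [← Measure.map_prod_map μ ν hT measurable_id, Measure.map_id, ← Measure.prod_smul_left]
  exact Measure.prod_mono h le_rfl

lemma isTopologicalBasis_cylinder_ge {α : Type*} [TopologicalSpace α] [DiscreteTopology α]
    (N : ℕ) :
    TopologicalSpace.IsTopologicalBasis
      {s : Set (ℕ → α) | ∃ x, ∃ m, N ≤ m ∧ s = cylinder x m} := by
  refine TopologicalSpace.isTopologicalBasis_of_isOpen_of_nhds ?_ fun x u hx hu => ?_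
  · rintro _ ⟨x, m, -, rfl⟩
    exact isOpen_cylinder _ x m
  · obtain ⟨_, ⟨y, m, rfl⟩, hxy, hsub⟩ :=
      (isTopologicalBasis_cylinders fun _ => α).exists_subset_of_mem_open hx hu
    rw [← mem_cylinder_iff_eq.1 hxy] at hsub
    exact ⟨cylinder x (max m N), ⟨x, _, le_max_right m N, rfl⟩, self_mem_cylinder x _,
      (cylinder_anti x (le_max_left m N)).trans hsub⟩

lemma isPiSystem_cylinder_ge {α : Type*} (N : ℕ) :
    IsPiSystem {s : Set (ℕ → α) | ∃ x, ∃ m, N ≤ m ∧ s = cylinder x m} := by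
  rintro _ ⟨x, m, hm, rfl⟩ _ ⟨y, m', -, rfl⟩ ⟨z, hzx, hzy⟩
  refine ⟨z, max m m', le_max_of_le_left hm, ?_⟩
  rw [← mem_cylinder_iff_eq.1 hzx, ← mem_cylinder_iff_eq.1 hzy]
  ext w
  simp only [Set.mem_inter_iff, mem_cylinder_iff, lt_max_iff]
  exact ⟨fun h i hi => hi.elim (h.1 i) (h.2 i),
    fun h => ⟨fun i hi => h i (.inl hi), fun i hi => h i (.inr hi)⟩⟩

lemma countable_range_cylinder {α : Type*} [Countable α] (N : ℕ) :
    (Set.range fun x : ℕ → α => cylinder x N).Countable := by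
  refine (Set.countable_range fun t : Fin N → α => {y : ℕ → α | ∀ i : Fin N, y i = t i}).mono ?_
  rintro _ ⟨x, rfl⟩
  exact ⟨fun i => x i, by ext y; simp [Fin.forall_iff]⟩

theorem measure_eq_of_cylinder {α : Type*} [TopologicalSpace α] [DiscreteTopology α]
    [Countable α] [MeasurableSpace α] [BorelSpace α] {μ₁ μ₂ : Measure (ℕ → α)}
    [IsFiniteMeasure μ₁] (N : ℕ)
    (h : ∀ x, ∀ m, N ≤ m → μ₁ (cylinder x m) = μ₂ (cylinder x m)) : μ₁ = μ₂ := by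
  refine Measure.ext_of_generateFrom_of_cover_subset
    (BorelSpace.measurable_eq.trans (isTopologicalBasis_cylinder_ge N).borel_eq_generateFrom)
    (isPiSystem_cylinder_ge N) ?_ (countable_range_cylinder N) ?_
    (fun _ _ => measure_ne_top _ _) ?_
  · rintro _ ⟨x, rfl⟩
    exact ⟨x, N, le_rfl, rfl⟩
  · exact Set.sUnion_eq_univ_iff.2 fun x => ⟨_, ⟨x, rfl⟩, self_mem_cylinder x N⟩
  · rintro _ ⟨x, m, hm, rfl⟩
    exact h x m hm

lemma odometerInv_zero (x : ℕ → Bool) : odometerInv x 0 = !x 0 := by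
  simp [odometerInv]

lemma odometerInv_succ (x : ℕ → Bool) (i : ℕ) :
    odometerInv x (i + 1) = if x 0 then x (i + 1) else odometerInv (fun k => x (k + 1)) i := by
  unfold odometerInv
  simp only [Nat.forall_lt_succ_left]
  cases x 0 <;> simp

lemma odometerInv_odometerInv_zero (x : ℕ → Bool) : odometerInv (odometerInv x) 0 = x 0 := by
  simp [odometerInv_zero]

lemma odometerInv_odometerInv_succ (x : ℕ → Bool) (i : ℕ) :
    odometerInv (odometerInv x) (i + 1) = odometerInv (fun k => x (k + 1)) i := by
  cases h : x 0 <;> simp [odometerInv_succ, odometerInv_zero, h]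

lemma odometerInv_comp_self_iterate_zero (m : ℕ) (x : ℕ → Bool) :
    (odometerInv ∘ odometerInv)^[m] x 0 = x 0 := by
  induction m with
  | zero => rfl
  | succ m ih => rw [Function.iterate_succ_apply', Function.comp_apply,
      odometerInv_odometerInv_zero, ih]

lemma odometerInv_comp_self_iterate_succ (m : ℕ) (x : ℕ → Bool) (i : ℕ) :
    (odometerInv ∘ odometerInv)^[m] x (i + 1) = odometerInv^[m] (fun k => x (k + 1)) i := by
  induction m generalizing x with
  | zero => rfl
  | succ m ih =>
    have htail : (fun k => odometerInv (odometerInv x) (k + 1)) =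
        odometerInv (fun k => x (k + 1)) :=
      funext (odometerInv_odometerInv_succ x)
    rw [Function.iterate_succ_apply, Function.iterate_succ_apply, Function.comp_apply, ih, htail]

theorem odometerInv_iterate_two_pow (n : ℕ) (x : ℕ → Bool) (i : ℕ) :
    odometerInv^[2 ^ n] x i =
      if i < n then x i else odometerInv (fun k => x (n + k)) (i - n) := by
  induction n generalizing x i with
  | zero => simp
  | succ n ih =>
    rw [pow_succ', Function.iterate_mul, show odometerInv^[2] = odometerInv ∘ odometerInv from rfl]
    cases i with
    | zero => simp [odometerInv_comp_self_iterate_zero]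
    | succ i =>
      rw [odometerInv_comp_self_iterate_succ, ih]
      simp [add_assoc, add_comm 1]

lemma measurable_odometerInv : Measurable odometerInv :=
  measurable_pi_lambda _ fun i => Measurable.ite
    (isOpen_cylinder (fun _ => Bool) (fun _ => false) i).measurableSet
    ((measurable_of_countable not).comp (measurable_pi_apply i)) (measurable_pi_apply i)

def flipOn (I : Finset ℕ) (x : ℕ → Bool) : ℕ → Bool :=
  fun i => if i ∈ I then !x i else x i

def runSet (n j : ℕ) (b : Bool) : Set (ℕ → Bool) :=
  {x | (∀ k < j, x (n + k) = b) ∧ x (n + j) = !b}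

lemma odometerInv_iterate_two_pow_eq_flipOn {n j : ℕ} {x : ℕ → Bool}
    (hx : x ∈ runSet n j false) :
    odometerInv^[2 ^ n] x = flipOn (Finset.Ico n (n + j + 1)) x := by
  funext i
  simp only [odometerInv_iterate_two_pow, flipOn, Finset.mem_Ico]
  by_cases hin : i < n
  · simp [hin]
  · obtain ⟨k, rfl⟩ := Nat.exists_eq_add_of_le (not_lt.1 hin)
    have hrun : (∀ l < k, x (n + l) = false) ↔ k ≤ j := by
      refine ⟨fun h => not_lt.1 fun hjk => ?_, fun hkj l hl => hx.1 l (by omega)⟩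
      simpa [hx.2] using h j hjk
    simp [odometerInv, hrun]

lemma flipOn_preimage_runSet (n j : ℕ) :
    flipOn (Finset.Ico n (n + j + 1)) ⁻¹' runSet n j true = runSet n j false := by
  ext x
  have hflip : ∀ k ≤ j, flipOn (Finset.Ico n (n + j + 1)) x (n + k) = !x (n + k) :=
    fun k hk => if_pos (Finset.mem_Ico.2 ⟨by omega, by omega⟩)
  simp only [Set.mem_preimage, runSet]
  exact and_congr (forall₂_congr fun k hk => by simp [hflip k hk.le]) (by simp [hflip j le_rfl])

lemma odometerInv_iterate_two_pow_preimage_inter_runSet (n j : ℕ) (A : Set (ℕ → Bool)) :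
    odometerInv^[2 ^ n] ⁻¹' A ∩ runSet n j false =
      flipOn (Finset.Ico n (n + j + 1)) ⁻¹' (A ∩ runSet n j true) := by
  rw [Set.preimage_inter, flipOn_preimage_runSet]
  ext x
  exact and_congr_left fun hx => by rw [Set.mem_preimage, Set.mem_preimage,
    odometerInv_iterate_two_pow_eq_flipOn hx]

lemma pairwise_disjoint_runSet (n : ℕ) (b : Bool) :
    Pairwise (Function.onFun Disjoint fun j => runSet n j b) := by
  intro j j' hjj'
  refine Set.disjoint_left.2 fun x hx hx' => ?_
  rcases lt_or_gt_of_ne hjj' with h | h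
  · simpa [hx.2] using hx'.1 j h
  · simpa [hx'.2] using hx.1 j' h

lemma measurableSet_runSet (n j : ℕ) (b : Bool) : MeasurableSet (runSet n j b) := by
  unfold runSet
  measurability

lemma flipOn_preimage_cylinder (I : Finset ℕ) (x : ℕ → Bool) (m : ℕ) :
    flipOn I ⁻¹' cylinder x m = cylinder (flipOn I x) m := by
  ext y
  refine forall₂_congr fun i _ => ?_
  by_cases hi : i ∈ I <;> simp [flipOn, hi, Bool.not_eq_eq_eq_not]

lemma measurable_flipOn (I : Finset ℕ) : Measurable (flipOn I) :=
  measurable_pi_lambda _ fun i => Measurable.ite (MeasurableSet.const (i ∈ I))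
    ((measurable_of_countable not).comp (measurable_pi_apply i)) (measurable_pi_apply i)

noncomputable def bernoulliWeight (a : ℝ) (b : Bool) : ℝ≥0∞ :=
  ENNReal.ofReal (if b then 1 - a else a)

lemma bernoulliWeight_ne_zero {a : ℝ} (ha0 : 0 < a) (ha1 : a < 1) (b : Bool) :
    bernoulliWeight a b ≠ 0 := by
  cases b <;> simp [bernoulliWeight, ha0, ha1]

lemma bernoulliWeight_ne_top (a : ℝ) (b : Bool) : bernoulliWeight a b ≠ ⊤ :=
  ENNReal.ofReal_ne_top

noncomputable def flipDensity (a : ℝ) (I : Finset ℕ) (x : ℕ → Bool) : ℝ≥0∞ :=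
  ∏ i ∈ I, bernoulliWeight a (!x i) / bernoulliWeight a (x i)

lemma flipDensity_le_of_mem_runSet {a : ℝ} (ha : a ≤ 1 / 2) {n j : ℕ} {x : ℕ → Bool}
    (hx : x ∈ runSet n j true) :
    flipDensity a (Finset.Ico n (n + j + 1)) x ≤
      bernoulliWeight a true / bernoulliWeight a false := by
  have hrun : ∀ k ∈ Finset.Ico n (n + j),
      bernoulliWeight a (!x k) / bernoulliWeight a (x k) ≤ 1 := by
    intro k hk
    obtain ⟨l, rfl⟩ := Nat.exists_eq_add_of_le (Finset.mem_Ico.1 hk).1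
    rw [hx.1 l (by simpa using hk)]
    exact ENNReal.div_le_of_le_mul (by
      simpa [bernoulliWeight] using ENNReal.ofReal_le_ofReal (by linarith : a ≤ 1 - a))
  rw [flipDensity, Finset.prod_Ico_succ_top (Nat.le_add_right n j), hx.2]
  exact mul_le_of_le_one_left bot_le (Finset.prod_le_one' hrun)

namespace IsBernoulliProd

variable {a : ℝ} {ν : Measure (ℕ → Bool)}

lemma measure_cylinder (hν : IsBernoulliProd a ν) (x : ℕ → Bool) (m : ℕ) :
    ν (cylinder x m) = ∏ i ∈ Finset.range m, bernoulliWeight a (x i) := by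
  have hcyl : cylinder x m = {y | ∀ i : Fin m, y i = x i} := by
    ext y
    simp [Fin.forall_iff]
  rw [hcyl, hν.2 m (fun i => x i), ← Fin.prod_univ_eq_prod_range]
  rfl

lemma nullSingletonClass (hν : IsBernoulliProd a ν) (ha0 : 0 < a) (ha1 : a < 1) :
    NullSingletonClass ν := by
  have hlt : ENNReal.ofReal (max a (1 - a)) < 1 :=
    ENNReal.ofReal_lt_one.2 (max_lt ha1 (by linarith))
  have hle : ∀ b, bernoulliWeight a b ≤ ENNReal.ofReal (max a (1 - a)) := fun b =>
    ENNReal.ofReal_le_ofReal (by cases b <;> simp)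
  refine ⟨fun x => le_antisymm (ge_of_tendsto'
    (ENNReal.tendsto_pow_atTop_nhds_zero_of_lt_one hlt) fun m => ?_) bot_le⟩
  calc ν {x} ≤ ν (cylinder x m) :=
        measure_mono (Set.singleton_subset_iff.2 (self_mem_cylinder x m))
    _ = ∏ i ∈ Finset.range m, bernoulliWeight a (x i) := hν.measure_cylinder x m
    _ ≤ ENNReal.ofReal (max a (1 - a)) ^ m := by
      simpa using Finset.prod_le_pow_card (Finset.range m) _ _ fun i _ => hle (x i)

lemma ae_exists_mem_runSet (hν : IsBernoulliProd a ν) (ha0 : 0 < a) (ha1 : a < 1) (n : ℕ) :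
    ∀ᵐ x ∂ν, ∃ j, x ∈ runSet n j false := by
  have hcount : {x : ℕ → Bool | ∀ k, n ≤ k → x k = false}.Countable := by
    refine (Set.countable_range fun t : Fin n → Bool =>
      fun i => if h : i < n then t ⟨i, h⟩ else false).mono ?_
    intro x hx
    refine ⟨fun i => x i, funext fun i => ?_⟩
    by_cases h : i < n
    · simp [h]
    · simp [h, hx i (not_lt.1 h)]
  have := hν.nullSingletonClass ha0 ha1
  filter_upwards [hcount.ae_notMem ν] with x hx
  classical
  have hex : ∃ k, x (n + k) = true := by
    simp only [not_forall, Bool.not_eq_false] at hx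
    obtain ⟨k, hk, hxk⟩ := hx
    exact ⟨k - n, by rwa [Nat.add_sub_cancel' hk]⟩
  exact ⟨Nat.find hex, fun l hl => by simpa using Nat.find_min hex hl,
    by simpa using Nat.find_spec hex⟩

theorem map_flipOn (hν : IsBernoulliProd a ν) (ha0 : 0 < a) (ha1 : a < 1) (I : Finset ℕ) :
    ν.map (flipOn I) = ν.withDensity (flipDensity a I) := by
  have := hν.1
  refine measure_eq_of_cylinder (I.sup id + 1) fun x m hm => ?_
  have hIm : ∀ i ∈ I, i < m := fun i hi =>
    (Nat.lt_succ_of_le (Finset.le_sup (f := id) hi)).trans_le hm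
  have hcyl : MeasurableSet (cylinder x m) := (isOpen_cylinder _ x m).measurableSet
  have hconst : Set.EqOn (flipDensity a I) (fun _ => flipDensity a I x) (cylinder x m) :=
    fun y hy => Finset.prod_congr rfl fun i hi => by rw [hy i (hIm i hi)]
  have hweight : ∀ i, bernoulliWeight a (flipOn I x i) =
      (if i ∈ I then bernoulliWeight a (!x i) / bernoulliWeight a (x i) else 1) *
        bernoulliWeight a (x i) := by
    intro i
    by_cases hi : i ∈ I
    · simp [flipOn, hi, ENNReal.div_mul_cancel (bernoulliWeight_ne_zero ha0 ha1 _)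
        (bernoulliWeight_ne_top a _)]
    · simp [flipOn, hi]
  rw [Measure.map_apply (measurable_flipOn I) hcyl, flipOn_preimage_cylinder,
    withDensity_apply _ hcyl, setLIntegral_congr_fun hcyl hconst, setLIntegral_const,
    hν.measure_cylinder, hν.measure_cylinder, Finset.prod_congr rfl fun i _ => hweight i,
    Finset.prod_mul_distrib, Finset.prod_ite_mem,
    Finset.inter_eq_right.2 fun i hi => Finset.mem_range.2 (hIm i hi)]
  rfl

end IsBernoulliProd

theorem IsBernoulliProd.map_odometerInv_iterate_two_pow_le {a : ℝ}
    {ν : Measure (ℕ → Bool)} (hν : IsBernoulliProd a ν) (ha0 : 0 < a) (ha : a ≤ 1 / 2)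
    (n : ℕ) :
    ν.map (odometerInv^[2 ^ n]) ≤ (bernoulliWeight a true / bernoulliWeight a false) • ν := by
  have ha1 : a < 1 := by linarith
  set C := bernoulliWeight a true / bernoulliWeight a false
  set I : ℕ → Finset ℕ := fun j => Finset.Ico n (n + j + 1)
  refine Measure.le_iff.2 fun A hA => ?_
  rw [Measure.map_apply (measurable_odometerInv.iterate _) hA, Measure.smul_apply, smul_eq_mul]
  calc ν (odometerInv^[2 ^ n] ⁻¹' A)
      ≤ ν (⋃ j, odometerInv^[2 ^ n] ⁻¹' A ∩ runSet n j false) := measure_mono_ae <| by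
        filter_upwards [hν.ae_exists_mem_runSet ha0 ha1 n] with x ⟨j, hj⟩ hxA
        exact Set.mem_iUnion.2 ⟨j, hxA, hj⟩
    _ ≤ ∑' j, ν (flipOn (I j) ⁻¹' (A ∩ runSet n j true)) := by
        simp only [odometerInv_iterate_two_pow_preimage_inter_runSet, I]
        exact measure_iUnion_le _
    _ = ∑' j, ∫⁻ x in A ∩ runSet n j true, flipDensity a (I j) x ∂ν := by
        refine tsum_congr fun j => ?_
        rw [← withDensity_apply _ (hA.inter (measurableSet_runSet n j true)),
          ← hν.map_flipOn ha0 ha1,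
          Measure.map_apply (measurable_flipOn _) (hA.inter (measurableSet_runSet n j true))]
    _ ≤ ∑' j, C * ν (A ∩ runSet n j true) := ENNReal.tsum_le_tsum fun j =>
        (setLIntegral_mono measurable_const fun x hx =>
          flipDensity_le_of_mem_runSet ha hx.2).trans_eq (setLIntegral_const _ _)
    _ = C * ν (⋃ j, A ∩ runSet n j true) := by
        rw [ENNReal.tsum_mul_left, measure_iUnion
          (fun j j' h => ((pairwise_disjoint_runSet n true h).mono Set.inter_subset_right
            Set.inter_subset_right))
          fun j => hA.inter (measurableSet_runSet n j true)]
    _ ≤ C * ν A := by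
        gcongr
        exact Set.iUnion_subset fun j => Set.inter_subset_left

lemma tendsto_odometerInv_iterate_two_pow (x : ℕ → Bool) :
    Tendsto (fun n => odometerInv^[2 ^ n] x) atTop (𝓝 x) :=
  tendsto_pi_nhds.2 fun i => tendsto_const_nhds.congr' <|
    (eventually_gt_atTop i).mono fun n hn => by simp [odometerInv_iterate_two_pow, hn]

lemma odometerZ_neg_natCast (k : ℕ) : odometerZ (-k) = odometerInv^[k] := by
  funext x
  by_cases hk : k = 0 <;> simp [odometerZ, hk]

lemma flowMap_intCast (m : ℤ) {z : (ℕ → Bool) × ℝ} (hz : z.2 ∈ Set.Ico (0 : ℝ) 1) :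
    flowMap m z = (odometerZ m z.1, z.2) := by
  simp [flowMap, Int.floor_eq_zero_iff.2 hz, Int.fract_eq_self.2 hz]

lemma flowMap_neg_two_pow (n : ℕ) {z : (ℕ → Bool) × ℝ} (hz : z.2 ∈ Set.Ico (0 : ℝ) 1) :
    flowMap (-(2 ^ n : ℝ)) z = Prod.map (odometerInv^[2 ^ n]) id z := by
  have hcast : (-(2 ^ n : ℝ)) = ((-((2 ^ n : ℕ) : ℤ) : ℤ) : ℝ) := by push_cast; ring
  rw [hcast, flowMap_intCast _ hz, odometerZ_neg_natCast]
  rfl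

theorem tendsto_L2_flow_two_pow_general (a : ℝ) (ha0 : 0 < a) (ha : a ≤ 1 / 2)
    (ν : Measure (ℕ → Bool)) (hν : IsBernoulliProd a ν)
    (f : (ℕ → Bool) × ℝ → ℝ)
    (hfbd : MemLp f ⊤ (ν.prod (volume.restrict (Set.Ico (0 : ℝ) 1)))) :
    Tendsto
      (fun n : ℕ =>
        eLpNorm (fun z => f (flowMap (-(2 ^ n : ℝ)) z) - f z) 2
          (ν.prod (volume.restrict (Set.Ico (0 : ℝ) 1))))
      atTop (𝓝 0) := by
  have := hν.1
  have hS : ∀ n, Measurable (odometerInv^[2 ^ n]) := fun n => measurable_odometerInv.iterate _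
  have hflow : ∀ n : ℕ, (fun z => f (flowMap (-(2 ^ n : ℝ)) z) - f z)
      =ᵐ[ν.prod (volume.restrict (Set.Ico (0 : ℝ) 1))]
        fun z => f (Prod.map (odometerInv^[2 ^ n]) id z) - f z := fun n => by
    filter_upwards [Measure.quasiMeasurePreserving_snd.ae (ae_restrict_mem measurableSet_Ico)]
      with z hz
    rw [flowMap_neg_two_pow n hz]
  simp_rw [eLpNorm_congr_ae (hflow _)]
  refine tendsto_eLpNorm_comp_sub_of_map_le one_le_two ENNReal.ofNat_ne_top
    (fun n => (hS n).prodMap measurable_id)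
    (fun z => (tendsto_odometerInv_iterate_two_pow z.1).prodMk_nhds tendsto_const_nhds) ?_
    (fun n => Measure.map_prodMap_id_le (hS n) (hν.map_odometerInv_iterate_two_pow_le ha0 ha n))
    (hfbd.mono_exponent le_top)
  exact ENNReal.div_ne_top (bernoulliWeight_ne_top a true)
    (bernoulliWeight_ne_zero ha0 (by linarith) false)

/-- For the flow `θ` built under the constant ceiling `1` over the dyadic odometer (with the
measure `ν_a × dx` on `{0,1}^ℕ × [0,1)`), `θ_{2^n}(f) = f ∘ g̃_{-2^n}` converges to `f`
in `L²(ν_a × dx)` for every `f ∈ L^∞`. -/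
theorem tendsto_L2_flow_two_pow (a : ℝ) (ha0 : 0 < a) (ha : a ≤ 1 / 2)
    (ν : Measure (ℕ → Bool)) (hν : IsBernoulliProd a ν)
    (f : (ℕ → Bool) × ℝ → ℝ) (hf : Measurable f)
    (hfbd : MemLp f ⊤ (ν.prod (volume.restrict (Set.Ico (0 : ℝ) 1)))) :
    Tendsto
      (fun n : ℕ =>
        eLpNorm (fun z => f (flowMap (-(2 ^ n : ℝ)) z) - f z) 2
          (ν.prod (volume.restrict (Set.Ico (0 : ℝ) 1))))
      atTop (𝓝 0) :=
  tendsto_L2_flow_two_pow_general a ha0 ha ν hν f hfbd
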